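/- arXiv:2312.00958 — 4 statements merged into one kernel-verified Lean document; each statement's English description precedes it below -/
import Mathlib

section
/- Let N be an n-Lie Poisson field over a field k of characteristic 0, and let x_1, …, x_n ∈ N. Let X be the subfield of N generated by x_1, …, x_n over k. If the transcendence degree of X over k is less than n, then {x_1, …, x_n} = 0. -/
/-- An `n`-Lie Poisson (Nambu-Poisson) bracket on a commutative `k`-algebra `N`:
an `n`-ary multilinear skew-symmetric operation satisfying the `n`-Lie Jacobi identity
and the Leibniz rule in each argument. -/
structure NambuBracket (k N : Type*) (n : ℕ) [CommRing k] [CommRing N] [Algebra k N] where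
  bracket : (Fin n → N) → N
  map_add : ∀ (v : Fin n → N) (i : Fin n) (a b : N),
    bracket (Function.update v i (a + b)) =
      bracket (Function.update v i a) + bracket (Function.update v i b)
  map_smul : ∀ (v : Fin n → N) (i : Fin n) (c : k) (a : N),
    bracket (Function.update v i (c • a)) = c • bracket (Function.update v i a)
  alternate : ∀ (v : Fin n → N) (i j : Fin n), i ≠ j → v i = v j → bracket v = 0
  leibniz : ∀ (v : Fin n → N) (i : Fin n) (a b : N),
    bracket (Function.update v i (a * b)) =
      a * bracket (Function.update v i b) + b * bracket (Function.update v i a)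
  jacobi : ∀ (u w : Fin n → N) (j : Fin n),
    bracket (Function.update w j (bracket u)) =
      ∑ s : Fin n, bracket (Function.update u s (bracket (Function.update w j (u s))))

open MvPolynomial Finsupp

/-- Chain rule for a derivation applied to a polynomial expression. -/
lemma derivation_aeval_eq {k N : Type*} [CommRing k] [CommRing N] [Algebra k N]
    {n : ℕ} (D : Derivation k N N) (x : Fin n → N) (p : MvPolynomial (Fin n) k) :
    D (aeval x p) = ∑ j : Fin n, aeval x (pderiv j p) * D (x j) := by
  induction p using MvPolynomial.induction_on with
  | C a => simp
  | add p q hp hq => simp [hp, hq, add_mul, Finset.sum_add_distrib]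
  | mul_X p i hp =>
      have step : ∀ j : Fin n, aeval x (pderiv j (p * X i)) * D (x j)
          = aeval x (pderiv j p) * x i * D (x j)
            + aeval x (p * pderiv j (X i)) * D (x j) := by
        intro j
        rw [pderiv_mul, map_add, map_mul, aeval_X, add_mul]
      rw [Finset.sum_congr rfl fun j _ => step j, Finset.sum_add_distrib]
      have h1 : ∑ j : Fin n, aeval x (p * pderiv j (X i)) * D (x j)
          = aeval x p * D (x i) := by
        rw [Finset.sum_eq_single i]
        · simp
        · intro j _ hj; rw [pderiv_X_of_ne (fun h => hj h.symm)]; simp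
        · simp
      rw [h1, map_mul, aeval_X, D.leibniz, smul_eq_mul, smul_eq_mul, hp,
        Finset.mul_sum]
      rw [Finset.sum_congr rfl (fun j _ => by ring :
        ∀ j ∈ Finset.univ, x i * (aeval x (pderiv j p) * D (x j))
          = aeval x (pderiv j p) * x i * D (x j))]
      ring

/-- Coefficient formula for partial derivatives of multivariate polynomials. -/
lemma coeff_pderiv' {σ R : Type*} [DecidableEq σ] [CommRing R] (i : σ)
    (p : MvPolynomial σ R) (m : σ →₀ ℕ) :
    coeff m (pderiv i p) = (m i + 1 : ℕ) * coeff (m + Finsupp.single i 1) p := by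
  induction p using MvPolynomial.induction_on' with
  | add p q hp hq => simp [hp, hq, mul_add]
  | monomial s a =>
      rw [pderiv_monomial, coeff_monomial, coeff_monomial]
      by_cases h : s = m + Finsupp.single i 1
      · have hsi : s i = m i + 1 := by simp [h]
        have : s - Finsupp.single i 1 = m := by
          rw [h, add_tsub_cancel_right]
        rw [if_pos this, if_pos h, hsi]
        push_cast
        ring
      · rw [if_neg h]
        by_cases hsi : s i = 0
        · by_cases h2 : s - Finsupp.single i 1 = m
          · rw [if_pos h2, hsi]; simp
          · rw [if_neg h2]; simp
        · have h2 : s - Finsupp.single i 1 ≠ m := by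
            intro hm
            apply h
            rw [← hm, tsub_add_cancel_of_le]
            exact Finsupp.single_le_iff.mpr (Nat.one_le_iff_ne_zero.mpr hsi)
          rw [if_neg h2]; simp

/-- The total degree of a partial derivative drops by at least one. -/
lemma totalDegree_pderiv_le {σ R : Type*} [DecidableEq σ] [CommRing R] (i : σ)
    (p : MvPolynomial σ R) {d : ℕ} (hd : p.totalDegree ≤ d + 1) :
    (pderiv i p).totalDegree ≤ d := by
  have hrep : pderiv i p
      = ∑ s ∈ p.support, monomial (s - Finsupp.single i 1) (coeff s p * (s i : R)) := by
    conv_lhs => rw [p.as_sum]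
    rw [map_sum]
    exact Finset.sum_congr rfl fun s _ => by rw [pderiv_monomial]
  rw [hrep]
  refine le_trans (totalDegree_finset_sum _ _) (Finset.sup_le fun s hs => ?_)
  by_cases hsi : s i = 0
  · rw [hsi]; simp
  · refine le_trans (totalDegree_monomial_le _ _) ?_
    have hc : s - Finsupp.single i 1 + Finsupp.single i 1 = s :=
      tsub_add_cancel_of_le (Finsupp.single_le_iff.mpr (Nat.one_le_iff_ne_zero.mpr hsi))
    have hsum : ((s - Finsupp.single i 1).sum fun _ e => e) + 1 = s.sum fun _ e => e := by
      conv_rhs => rw [← hc]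
      rw [Finsupp.sum_add_index' (fun _ => rfl) (fun _ _ _ => rfl)]
      simp
    have hle : (s.sum fun _ e => e) ≤ d + 1 := le_trans (le_totalDegree hs) hd
    simp only [Finsupp.sum, id_eq] at hsum hle ⊢
    omega

/-- The derivation `f ↦ {x₁,…,f,…,xₙ}` (in slot `i`) of a Nambu bracket. -/
def NambuBracket.deriv {k N : Type*} [CommRing k] [CommRing N] [Algebra k N]
    {n : ℕ} (π : NambuBracket k N n) (x : Fin n → N) (i : Fin n) :
    Derivation k N N where
  toFun f := π.bracket (Function.update x i f)
  map_add' a b := π.map_add x i a b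
  map_smul' c a := by simpa using π.map_smul x i c a
  map_one_eq_zero' := by
    have h := π.leibniz x i 1 1
    simp only [one_mul, mul_one] at h
    exact right_eq_add.mp h
  leibniz' a b := by simpa [smul_eq_mul] using π.leibniz x i a b

lemma NambuBracket.deriv_self {k N : Type*} [CommRing k] [CommRing N] [Algebra k N]
    {n : ℕ} (π : NambuBracket k N n) (x : Fin n → N) (i : Fin n) :
    π.deriv x i (x i) = π.bracket x := by
  show π.bracket (Function.update x i (x i)) = π.bracket x
  rw [Function.update_eq_self]

lemma NambuBracket.deriv_ne {k N : Type*} [CommRing k] [CommRing N] [Algebra k N]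
    {n : ℕ} (π : NambuBracket k N n) (x : Fin n → N) {i j : Fin n} (hij : j ≠ i) :
    π.deriv x i (x j) = 0 := by
  show π.bracket (Function.update x i (x j)) = 0
  exact π.alternate _ i j (fun h => hij h.symm) (by
    rw [Function.update_self, Function.update_of_ne hij])

/-- Let `N` be an `n`-Lie Poisson field over a field `k` of characteristic `0`
and `x_1, …, x_n ∈ N`.  If the subfield `X` generated by the `x_i` over `k` has
transcendence degree `< n` (equivalently, the `x_i` are algebraically dependent over `k`),
then `{x_1, …, x_n} = 0`. -/
theorem nambu_bracket_eq_zero_of_algebraically_dependent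
    (k N : Type*) [Field k] [CharZero k] [Field N] [Algebra k N]
    (n : ℕ) (π : NambuBracket k N n)
    (x : Fin n → N) (hx : ¬ AlgebraicIndependent k x) :
    π.bracket x = 0 := by
  by_contra hb
  apply hx
  rw [algebraicIndependent_iff]
  have key : ∀ d (p : MvPolynomial (Fin n) k),
      p.totalDegree ≤ d → aeval x p = 0 → p = 0 := by
    intro d
    induction d with
    | zero =>
        intro p hdeg hp
        have hsupp : ∀ m ∈ p.support, m = (0 : Fin n →₀ ℕ) := by
          intro m hm
          ext j
          exact ((totalDegree_eq_zero_iff (Fin n) p).mp (Nat.le_zero.mp hdeg)) m hm j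
        have hC : p = C (coeff 0 p) := by
          ext m
          by_cases hm : m = 0
          · subst hm; simp
          · rw [coeff_C, if_neg (fun h => hm h.symm)]
            by_contra hc
            exact hm (hsupp m (MvPolynomial.mem_support_iff.mpr hc))
        rw [hC] at hp ⊢
        rw [aeval_C] at hp
        have : coeff 0 p = 0 := (algebraMap k N).injective (by rw [hp, map_zero])
        rw [this, map_zero]
    | succ d ih =>
        intro p hdeg hp
        -- each partial derivative of p also vanishes at x
        have hpd : ∀ i : Fin n, pderiv i p = 0 := by
          intro i
          have hchain := derivation_aeval_eq (π.deriv x i) x p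
          rw [hp, map_zero] at hchain
          rw [Finset.sum_eq_single i (fun j _ hj => by
              rw [π.deriv_ne x hj, mul_zero]) (by simp)] at hchain
          rw [π.deriv_self] at hchain
          have hev : aeval x (pderiv i p) = 0 := by
            rcases mul_eq_zero.mp hchain.symm with h | h
            · exact h
            · exact absurd h hb
          exact ih (pderiv i p) (totalDegree_pderiv_le i p hdeg) hev
        -- char 0 : all partials vanish forces p to be a constant
        have hsupp : ∀ m ∈ p.support, m = (0 : Fin n →₀ ℕ) := by
          intro m hm
          by_contra hm0
          obtain ⟨i, hi⟩ : ∃ i, m i ≠ 0 := by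
            by_contra hall
            push_neg at hall
            exact hm0 (Finsupp.ext hall)
          have hco := coeff_pderiv' i p (m - Finsupp.single i 1)
          rw [hpd i] at hco
          have hc1 : m - Finsupp.single i 1 + Finsupp.single i 1 = m :=
            tsub_add_cancel_of_le (Finsupp.single_le_iff.mpr (Nat.one_le_iff_ne_zero.mpr hi))
          rw [hc1, coeff_zero] at hco
          have : coeff m p = 0 := by
            rcases mul_eq_zero.mp hco.symm with h | h
            · exact absurd h (Nat.cast_ne_zero.mpr (Nat.succ_ne_zero _))
            · exact h
          exact MvPolynomial.mem_support_iff.mp hm this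
        have hC : p = C (coeff 0 p) := by
          ext m
          by_cases hm : m = 0
          · subst hm; simp
          · rw [coeff_C, if_neg (fun h => hm h.symm)]
            by_contra hc
            exact hm (hsupp m (MvPolynomial.mem_support_iff.mpr hc))
        rw [hC] at hp ⊢
        rw [aeval_C] at hp
        have : coeff 0 p = 0 := (algebraMap k N).injective (by rw [hp, map_zero])
        rw [this, map_zero]
  exact fun p hp => key p.totalDegree p le_rfl hp
end

section
/- Let N be an n-Lie Poisson field of transcendence degree n over a field k of characteristic 0 with nontrivial n-Lie Poisson bracket. If x_1, …, x_n ∈ N satisfy {x_1,…,x_n} = 0, then the subfield X generated by x_1,…,x_n over k has transcendence degree strictly less than n. -/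
open IntermediateField

section FieldTheory

variable {k N : Type*} [Field k] [Field N] [Algebra k N]

theorem NB.isAlg_mono {F₁ F₂ : IntermediateField k N} (h : F₁ ≤ F₂) {a : N}
    (ha : IsAlgebraic F₁ a) : IsAlgebraic F₂ a :=
  ha.tower_top_of_subalgebra_le (A := F₁.toSubalgebra) (B := F₂.toSubalgebra) h

theorem NB.isAlg_of_ring_adjoin {S : Set N} {a : N}
    (ha : IsAlgebraic (Algebra.adjoin k S) a) :
    IsAlgebraic (IntermediateField.adjoin k S) a :=
  ha.tower_top_of_subalgebra_le (IntermediateField.algebra_adjoin_le_adjoin k S)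

theorem NB.isAlg_to_ring_adjoin {S : Set N} {a : N}
    (ha : IsAlgebraic (IntermediateField.adjoin k S) a) :
    IsAlgebraic (Algebra.adjoin k S) a := by
  letI : Algebra (Algebra.adjoin k S) (IntermediateField.adjoin k S) :=
    (Subalgebra.inclusion (IntermediateField.algebra_adjoin_le_adjoin k S)).toRingHom.toAlgebra
  haveI : IsScalarTower (Algebra.adjoin k S) (IntermediateField.adjoin k S) N :=
    IsScalarTower.of_algebraMap_eq fun x => rfl
  haveI : IsFractionRing (Algebra.adjoin k S) (IntermediateField.adjoin k S) := by
    constructor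
    constructor
    · rintro ⟨y, hy⟩
      rw [isUnit_iff_ne_zero]
      intro h0
      have h1 : (y : N) = 0 := Subtype.ext_iff.mp h0
      exact nonZeroDivisors.coe_ne_zero ⟨y, hy⟩ (Subtype.ext h1)
    · intro z
      obtain ⟨r, s, hz⟩ := (IntermediateField.mem_adjoin_iff k (z : N)).1 z.2
      have hmem : ∀ p : MvPolynomial S k,
          MvPolynomial.aeval (Subtype.val : S → N) p ∈ Algebra.adjoin k S := by
        intro p
        have := Algebra.adjoin_range_eq_range_aeval k (Subtype.val : S → N)
        rw [Subtype.range_coe] at this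
        rw [this]
        exact ⟨p, rfl⟩
      set P := MvPolynomial.aeval (Subtype.val : S → N) r with hP
      set Q := MvPolynomial.aeval (Subtype.val : S → N) s with hQ
      by_cases hQ0 : Q = 0
      · refine ⟨⟨0, 1⟩, ?_⟩
        have hz0 : (z : N) = 0 := by rw [hz, hQ0, div_zero]
        have hzz : z = 0 := Subtype.ext hz0
        rw [hzz]
        simp
      · refine ⟨⟨⟨P, hmem r⟩, ⟨⟨Q, hmem s⟩,
          mem_nonZeroDivisors_of_ne_zero (fun h => hQ0 (congrArg Subtype.val h))⟩⟩, ?_⟩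
        exact Subtype.ext (show ((z : N) * Q : N) = P by rw [hz, div_mul_cancel₀ _ hQ0])
    · intro x y h
      refine ⟨1, ?_⟩
      have h1 := Subtype.ext_iff.mp h
      have h2 : x = y := Subtype.ext h1
      rw [h2]
  exact (IsFractionRing.isAlgebraic_iff (Algebra.adjoin k S)
    (IntermediateField.adjoin k S) N).mpr ha

end FieldTheory

section Exchange

variable {k N : Type*} [Field k] [Field N] [Algebra k N]

/-- If `y` is an algebraically independent family and `i ∉ T`, then `y i` is
transcendental over the intermediate field generated by `y '' T`. -/
theorem NB.transcendental_adjoin_image {ι : Type*} {y : ι → N}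
    (hy : AlgebraicIndependent k y) {T : Set ι} {i : ι} (hi : i ∉ T) :
    Transcendental (IntermediateField.adjoin k (y '' T)) (y i) := by
  intro halg
  have h1 : IsAlgebraic (Algebra.adjoin k (y '' T)) (y i) := NB.isAlg_to_ring_adjoin halg
  have hsub : AlgebraicIndependent k (y ∘ (Subtype.val : T → ι)) :=
    hy.comp _ Subtype.val_injective
  have hginj : Function.Injective (fun o : Option T => o.elim i Subtype.val) := by
    intro a b hab
    cases a with
    | none => cases b with
      | none => rfl
      | some b =>
        simp only [Option.elim] at hab
        exact absurd (by rw [hab]; exact b.2) hi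
    | some a => cases b with
      | none =>
        simp only [Option.elim] at hab
        exact absurd (by rw [← hab]; exact a.2) hi
      | some b =>
        simp only [Option.elim] at hab
        exact congrArg some (Subtype.ext hab)
  have hopt : AlgebraicIndependent k (fun o : Option T => o.elim (y i) (y ∘ Subtype.val)) := by
    have h2 := hy.comp (fun o : Option T => o.elim i Subtype.val) hginj
    have h3 : (y ∘ fun o : Option T => o.elim i Subtype.val) =
        fun o : Option T => o.elim (y i) (y ∘ Subtype.val) := by
      funext o; cases o <;> rfl
    rwa [h3] at h2
  have h4 := (hsub.option_iff_transcendental (y i)).1 hopt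
  rw [Set.range_comp, Subtype.range_coe] at h4
  exact h4 h1

/-- The exchange lemma: if `a` is transcendental over `F` but algebraic over `F(c)`,
then `c` is algebraic over `F(a)`. -/
theorem NB.exchange {F : IntermediateField k N} {a c : N}
    (ha : Transcendental F a)
    (h : IsAlgebraic (IntermediateField.adjoin F ({c} : Set N)) a) :
    IsAlgebraic (IntermediateField.adjoin F ({a} : Set N)) c := by
  by_contra hc
  have hc2 : Transcendental (Algebra.adjoin F ({a} : Set N)) c := fun halg =>
    hc (NB.isAlg_of_ring_adjoin halg)
  have ind_a : AlgebraicIndependent F (fun _ : Unit => a) :=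
    algebraicIndependent_unique_type_iff.2 ha
  have pair : AlgebraicIndependent F (fun o : Option Unit => o.elim c (fun _ => a)) := by
    refine (ind_a.option_iff_transcendental c).2 ?_
    rwa [Set.range_const]
  have ind_c : AlgebraicIndependent F (fun _ : Unit => c) := by
    have h2 := pair.comp (fun _ : Unit => none) (fun u v _ => Subsingleton.elim u v)
    exact h2
  have pair' : AlgebraicIndependent F (fun o : Option Unit => o.elim a (fun _ => c)) := by
    have einj : Function.Injective
        (fun o : Option Unit => o.elim (some ()) (fun _ => (none : Option Unit))) := by
      intro u v huv
      cases u <;> cases v <;> simp_all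
    have h2 := pair.comp _ einj
    have h3 : ((fun o : Option Unit => o.elim c (fun _ => a)) ∘
        (fun o : Option Unit => o.elim (some ()) (fun _ => (none : Option Unit)))) =
        fun o : Option Unit => o.elim a (fun _ => c) := by
      funext o; cases o <;> rfl
    rwa [h3] at h2
  have fin := (ind_c.option_iff_transcendental a).1 pair'
  rw [Set.range_const] at fin
  exact fin (NB.isAlg_to_ring_adjoin h)

/-- Iterated exchange over a finite set. -/
theorem NB.swap_finset [DecidableEq N] (s : Finset N) :
    ∀ (Y : Set N) (a : N), IsAlgebraic (IntermediateField.adjoin k (Y ∪ ↑s)) a →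
      Transcendental (IntermediateField.adjoin k Y) a →
      ∃ c ∈ s, IsAlgebraic (IntermediateField.adjoin k (Y ∪ {a} ∪ ↑(s.erase c))) c := by
  classical
  induction s using Finset.induction_on with
  | empty =>
    intro Y a h ht
    refine absurd (NB.isAlg_mono (le_of_eq ?_) h) ht
    congr 1
    simp
  | @insert c t hct ih =>
    intro Y a h ht
    by_cases halg : IsAlgebraic (IntermediateField.adjoin k (Y ∪ ↑t)) a
    · obtain ⟨c', hc't, hc'⟩ := ih Y a halg ht
      refine ⟨c', Finset.mem_insert_of_mem hc't, ?_⟩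
      refine NB.isAlg_mono (IntermediateField.adjoin.mono _ _ _ ?_) hc'
      intro z hz
      rcases hz with hz | hz
      · exact Or.inl hz
      · exact Or.inr (Finset.erase_subset_erase c' (Finset.subset_insert c t) hz)
    · have hta : Transcendental (IntermediateField.adjoin k (Y ∪ ↑t)) a := halg
      have hre := IntermediateField.adjoin_adjoin_left (F := k) (E := N) (S := Y ∪ ↑t) {c}
      have h' : IsAlgebraic
          (IntermediateField.adjoin (IntermediateField.adjoin k (Y ∪ ↑t)) ({c} : Set N)) a := by
        have h2 : IsAlgebraic (IntermediateField.adjoin k ((Y ∪ ↑t) ∪ {c})) a := by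
          refine NB.isAlg_mono (le_of_eq ?_) h
          congr 1
          rw [Finset.coe_insert, Set.insert_eq, Set.union_assoc, Set.union_comm {c} _,
            ← Set.union_assoc]
        rw [← hre] at h2
        exact h2
      have hcore := NB.exchange hta h'
      have hre2 := IntermediateField.adjoin_adjoin_left (F := k) (E := N) (S := Y ∪ ↑t) {a}
      have hcore2 : IsAlgebraic (IntermediateField.adjoin k ((Y ∪ ↑t) ∪ {a})) c := by
        rw [← hre2]
        exact hcore
      refine ⟨c, Finset.mem_insert_self c t, ?_⟩
      refine NB.isAlg_mono (IntermediateField.adjoin.mono _ _ _ ?_) hcore2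
      rw [Finset.erase_insert hct]
      intro z hz
      rcases hz with (hz | hz) | hz
      · exact Or.inl (Or.inl hz)
      · exact Or.inr hz
      · exact Or.inl (Or.inr hz)

end Exchange

section NoBigger

variable {k N : Type*} [Field k] [Field N] [Algebra k N]

/-- There is no algebraically independent family of `n+1` elements if there is a
transcendence basis with `n` elements. -/
theorem NB.not_indep_option {n : ℕ} {b : Fin n → N} (hb : IsTranscendenceBasis k b)
    {y : Option (Fin n) → N} (hy : AlgebraicIndependent k y) : False := by
  classical
  have main : ∀ j : ℕ, j ≤ n → ∃ t : Finset N, t.card + j ≤ n ∧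
      Algebra.IsAlgebraic
        (IntermediateField.adjoin k ((y ∘ some) '' {i : Fin n | (i : ℕ) < j} ∪ ↑t)) N := by
    intro j
    induction j with
    | zero =>
      intro _
      refine ⟨Finset.univ.image b, ?_, ?_⟩
      · simpa using Finset.card_image_le (f := b) (s := Finset.univ)
      · have h1 : ((y ∘ some) '' {i : Fin n | (i : ℕ) < 0} ∪ ↑(Finset.univ.image b))
            = Set.range b := by
          simp
        rw [h1]
        exact hb.isAlgebraic_field
    | succ j ihj =>
      intro hj1
      obtain ⟨t, hcard, halgN⟩ := ihj (Nat.le_of_succ_le hj1)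
      set Yj : Set N := (y ∘ some) '' {i : Fin n | (i : ℕ) < j} with hYj
      have hjn : j < n := hj1
      set aj : N := y (some ⟨j, hjn⟩) with haj
      have htrans : Transcendental (IntermediateField.adjoin k Yj) aj := by
        have hq : Yj = y '' (some '' {i : Fin n | (i : ℕ) < j}) := by
          rw [hYj, Set.image_comp]
        rw [hq]
        refine NB.transcendental_adjoin_image hy ?_
        rintro ⟨i, hi, hie⟩
        rw [Option.some_inj] at hie
        exact Nat.lt_irrefl j (by simpa [hie] using hi)
      have halg : IsAlgebraic (IntermediateField.adjoin k (Yj ∪ ↑t)) aj :=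
        halgN.isAlgebraic aj
      obtain ⟨c, hct, hc⟩ := NB.swap_finset t Yj aj halg htrans
      refine ⟨t.erase c, ?_, ?_⟩
      · have h2 := Finset.card_erase_of_mem hct
        have h1 : 1 ≤ t.card := Finset.card_pos.2 ⟨c, hct⟩
        omega
      · have hset : (y ∘ some) '' {i : Fin n | (i : ℕ) < j + 1} = Yj ∪ {aj} := by
          rw [hYj]
          ext z
          simp only [Set.mem_image, Set.mem_union, Set.mem_setOf_eq, Set.mem_singleton_iff,
            Function.comp_apply]
          constructor
          · rintro ⟨i, hi, rfl⟩
            rcases Nat.lt_succ_iff_lt_or_eq.1 hi with h | h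
            · exact Or.inl ⟨i, h, rfl⟩
            · exact Or.inr (congrArg (fun w => y (some w)) (Fin.ext h))
          · rintro (⟨i, hi, rfl⟩ | rfl)
            · exact ⟨i, Nat.lt_succ_of_lt hi, rfl⟩
            · exact ⟨⟨j, hjn⟩, Nat.lt_succ_self j, rfl⟩
        rw [hset]
        set K' := IntermediateField.adjoin k (Yj ∪ {aj} ∪ ↑(t.erase c)) with hK'
        haveI h5 : Algebra.IsAlgebraic K' (IntermediateField.adjoin K' ({c} : Set N)) :=
          IntermediateField.isAlgebraic_adjoin_simple hc.isIntegral
        haveI h6 : Algebra.IsAlgebraic (IntermediateField.adjoin K' ({c} : Set N)) N := by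
          constructor
          intro z
          have h7 : IsAlgebraic (IntermediateField.adjoin k (Yj ∪ ↑t)) z := halgN.isAlgebraic z
          have hre := IntermediateField.adjoin_adjoin_left (F := k) (E := N)
            (S := Yj ∪ {aj} ∪ ↑(t.erase c)) {c}
          have h8 : IsAlgebraic
              (IntermediateField.adjoin k ((Yj ∪ {aj} ∪ ↑(t.erase c)) ∪ {c})) z := by
            refine NB.isAlg_mono (IntermediateField.adjoin.mono _ _ _ ?_) h7
            intro w hw
            rcases hw with hw | hw
            · exact Or.inl (Or.inl (Or.inl hw))
            · by_cases hwc : w = c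
              · exact Or.inr hwc
              · exact Or.inl (Or.inr (Finset.mem_coe.2 (Finset.mem_erase.2 ⟨hwc, hw⟩)))
          rw [← hre] at h8
          exact h8
        exact Algebra.IsAlgebraic.trans K' ↥(IntermediateField.adjoin K' ({c} : Set N)) N
  obtain ⟨t, hcard, halgN⟩ := main n le_rfl
  have ht0 : t = ∅ := Finset.card_eq_zero.1 (by omega)
  have htrans : Transcendental
      (IntermediateField.adjoin k (y '' (some '' {i : Fin n | (i : ℕ) < n}))) (y none) :=
    NB.transcendental_adjoin_image hy (by rintro ⟨i, _, hie⟩; exact Option.some_ne_none _ hie)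
  refine htrans ?_
  have h9 := halgN.isAlgebraic (y none)
  refine NB.isAlg_mono (le_of_eq ?_) h9
  congr 1
  rw [ht0, Finset.coe_empty, Set.union_empty, Set.image_comp]

end NoBigger

section Derivations

variable {k N : Type*} [Field k] [Field N] [Algebra k N]

theorem NB.derivation_apply_eq_zero_of_mem_adjoin (D : Derivation k N N) {S : Set N}
    (h : ∀ c ∈ S, D c = 0) {a : N} (ha : a ∈ IntermediateField.adjoin k S) : D a = 0 := by
  have hadj : ∀ p ∈ Algebra.adjoin k S, D p = 0 := by
    intro p hp
    have heq : Set.EqOn D (0 : Derivation k N N) S := fun c hc => by simp [h c hc]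
    simpa using Derivation.eqOn_adjoin heq hp
  obtain ⟨r, s, hars⟩ := (IntermediateField.mem_adjoin_iff k a).1 ha
  have hmem : ∀ p : MvPolynomial S k,
      MvPolynomial.aeval (Subtype.val : S → N) p ∈ Algebra.adjoin k S := by
    intro p
    have h2 := Algebra.adjoin_range_eq_range_aeval k (Subtype.val : S → N)
    rw [Subtype.range_coe] at h2
    rw [h2]; exact ⟨p, rfl⟩
  rw [hars, Derivation.leibniz_div, hadj _ (hmem r), hadj _ (hmem s)]
  simp

theorem NB.derivation_eq_zero_of_isAlgebraic [CharZero k] {F : IntermediateField k N}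
    (halg : Algebra.IsAlgebraic F N) (D : Derivation k N N)
    (hD : ∀ c : N, c ∈ F → D c = 0) (a : N) : D a = 0 := by
  haveI : CharZero N := charZero_of_injective_algebraMap (algebraMap k N).injective
  haveI : CharZero F := (algebraMap F N).charZero
  haveI := halg
  haveI : Algebra.IsSeparable F N := inferInstance
  haveI := Algebra.FormallyUnramified.of_isSeparable F N
  let D' : Derivation F N N :=
    { toLinearMap :=
      { toFun := D
        map_add' := fun u v => D.map_add u v
        map_smul' := fun c u => by
          simp only [RingHom.id_apply]
          rw [Algebra.smul_def, D.leibniz,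
            show D ((algebraMap (↥F) N) c) = 0 from hD _ c.2, smul_zero, add_zero,
            algebraMap_smul] }
      map_one_eq_zero' := D.map_one_eq_zero
      leibniz' := fun u v => D.leibniz u v }
  have h1 : D a = D' a := rfl
  rw [h1, ← Derivation.liftKaehlerDifferential_comp_D D' a,
    Subsingleton.elim (KaehlerDifferential.D F N a) 0, map_zero]

end Derivations

namespace NambuBracket

variable {k N : Type*} [CommRing k] [CommRing N] [Algebra k N] {n : ℕ}
  (π : NambuBracket k N n)

/-- The bracket with all slots but `i` fixed, as a `k`-derivation. -/
def toDerivation (v : Fin n → N) (i : Fin n) : Derivation k N N where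
  toLinearMap :=
    { toFun := fun g => π.bracket (Function.update v i g)
      map_add' := fun a b => π.map_add v i a b
      map_smul' := fun c a => by simpa using π.map_smul v i c a }
  map_one_eq_zero' := by
    show π.bracket (Function.update v i 1) = 0
    have h := π.leibniz v i 1 1
    simp only [mul_one, one_mul] at h
    exact right_eq_add.mp h
  leibniz' := fun a b => by simpa [smul_eq_mul] using π.leibniz v i a b

@[simp] theorem toDerivation_apply (v : Fin n → N) (i : Fin n) (g : N) :
    π.toDerivation v i g = π.bracket (Function.update v i g) := rfl

theorem bracket_swap (v : Fin n → N) {i j : Fin n} (hij : i ≠ j) :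
    π.bracket (Function.update (Function.update v j (v i)) i (v j)) = - π.bracket v := by
  have h0 : π.bracket
      (Function.update (Function.update v i (v i + v j)) j (v i + v j)) = 0 := by
    refine π.alternate _ i j hij ?_
    rw [Function.update_of_ne hij, Function.update_self, Function.update_self]
  rw [π.map_add (Function.update v i (v i + v j)) j (v i) (v j),
    Function.update_comm hij (v i + v j) (v i) v,
    Function.update_comm hij (v i + v j) (v j) v,
    π.map_add (Function.update v j (v i)) i (v i) (v j),
    π.map_add (Function.update v j (v j)) i (v i) (v j)] at h0
  have hB1 : π.bracket (Function.update (Function.update v j (v i)) i (v i)) = 0 := by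
    refine π.alternate _ i j hij ?_
    rw [Function.update_self, Function.update_of_ne hij.symm, Function.update_self]
  have hv : Function.update v j (v j) = v := Function.update_eq_self j v
  rw [hv] at h0
  have hB4 : π.bracket (Function.update v i (v j)) = 0 := by
    refine π.alternate _ i j hij ?_
    rw [Function.update_self, Function.update_of_ne hij.symm]
  rw [Function.update_eq_self i v, hB1, hB4] at h0
  linear_combination h0

theorem bracket_comp_swap (w : Fin n → N) {a b : Fin n} (hab : a ≠ b) :
    π.bracket (w ∘ Equiv.swap a b) = - π.bracket w := by
  have hcomp : w ∘ Equiv.swap a b =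
      Function.update (Function.update w b (w a)) a (w b) := by
    funext p
    rcases eq_or_ne p a with rfl | hpa
    · simp only [Function.comp_apply, Equiv.swap_apply_left, Function.update_self]
    · rcases eq_or_ne p b with rfl | hpb
      · simp only [Function.comp_apply, Equiv.swap_apply_right,
          Function.update_of_ne hab.symm, Function.update_self]
      · simp only [Function.comp_apply, Equiv.swap_apply_of_ne_of_ne hpa hpb,
          Function.update_of_ne hpa, Function.update_of_ne hpb]
  rw [hcomp]
  exact π.bracket_swap w hab

theorem bracket_comp_perm {x : Fin n → N} (hx : π.bracket x = 0) (σ : Equiv.Perm (Fin n)) :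
    π.bracket (x ∘ σ) = 0 := by
  refine Equiv.Perm.swap_induction_on' (motive := fun τ => π.bracket (x ∘ ⇑τ) = 0) σ ?_ ?_
  · simpa using hx
  · intro f a b hab hf
    have hmul : x ∘ ⇑(f * Equiv.swap a b) = (x ∘ ⇑f) ∘ ⇑(Equiv.swap a b) := rfl
    show π.bracket (x ∘ ⇑(f * Equiv.swap a b)) = 0
    rw [hmul, π.bracket_comp_swap (x ∘ ⇑f) hab, hf, neg_zero]

end NambuBracket


/-- Let `N` be an `n`-Lie Poisson field of transcendence degree `n` over a
field `k` of characteristic `0` with nontrivial bracket.  If `{x_1, …, x_n} = 0` then the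
subfield generated by the `x_i` has transcendence degree `< n` (equivalently the `x_i`
are algebraically dependent over `k`). -/
theorem algebraically_dependent_of_nambu_bracket_eq_zero
    (k N : Type*) [Field k] [CharZero k] [Field N] [Algebra k N]
    (n : ℕ) (π : NambuBracket k N n)
    (htrdeg : ∃ b : Fin n → N, IsTranscendenceBasis k b)
    (hnontriv : ∃ v : Fin n → N, π.bracket v ≠ 0)
    (x : Fin n → N) (hx : π.bracket x = 0) :
    ¬ AlgebraicIndependent k x := by
  intro hxi
  obtain ⟨b, hb⟩ := htrdeg
  obtain ⟨v₀, hv₀⟩ := hnontriv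
  have HX : Algebra.IsAlgebraic (IntermediateField.adjoin k (Set.range x)) N := by
    constructor
    intro a
    by_contra hna
    have htr : Transcendental (Algebra.adjoin k (Set.range x)) a := fun halg =>
      hna (NB.isAlg_of_ring_adjoin halg)
    exact NB.not_indep_option hb ((hxi.option_iff_transcendental a).2 htr)
  have key : ∀ m : ℕ, ∀ v : Fin n → N, ∀ u : Fin n → Fin n,
      Set.InjOn u {i : Fin n | m ≤ (i : ℕ)} →
      (∀ i : Fin n, m ≤ (i : ℕ) → v i = x (u i)) → π.bracket v = 0 := by
    intro m
    induction m with
    | zero =>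
      intro v u hinj hval
      have huinj : Function.Injective u := fun a b hab =>
        hinj (by simp) (by simp) hab
      let σ := Equiv.ofBijective u (Finite.injective_iff_bijective.1 huinj)
      have hveq : v = x ∘ σ := funext fun i => hval i (Nat.zero_le _)
      rw [hveq]
      exact π.bracket_comp_perm hx σ
    | succ m ih =>
      intro v u hinj hval
      by_cases hm : m < n
      · set i₀ : Fin n := ⟨m, hm⟩ with hi₀
        set D := π.toDerivation v i₀ with hD
        have hvi : ∀ i : Fin n, i ≠ i₀ → m + 1 ≤ (i : ℕ) → m + 1 ≤ (i : ℕ) := fun i _ h => h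
        have hDx : ∀ t : Fin n, D (x t) = 0 := by
          intro t
          by_cases hex : ∃ i : Fin n, m + 1 ≤ (i : ℕ) ∧ u i = t
          · obtain ⟨i, hi, hui⟩ := hex
            have hne : i₀ ≠ i := by
              intro h
              rw [← h] at hi
              simp only [hi₀] at hi
              omega
            refine π.alternate (Function.update v i₀ (x t)) i₀ i hne ?_
            rw [Function.update_self, Function.update_of_ne hne.symm,
              hval i (by omega), hui]
          · refine ih (Function.update v i₀ (x t)) (Function.update u i₀ t) ?_ ?_
            · intro p hp q hq hpq
              have hstep : ∀ r : Fin n, r ≠ i₀ → m ≤ (r : ℕ) → m + 1 ≤ (r : ℕ) := by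
                intro r hr hmr
                have : (r : ℕ) ≠ m := fun h => hr (Fin.ext h)
                omega
              by_cases hpi : p = i₀
              · by_cases hqi : q = i₀
                · rw [hpi, hqi]
                · exfalso
                  apply hex
                  rw [hpi, Function.update_self, Function.update_of_ne hqi] at hpq
                  exact ⟨q, hstep q hqi hq, hpq.symm⟩
              · by_cases hqi : q = i₀
                · exfalso
                  apply hex
                  rw [hqi, Function.update_self, Function.update_of_ne hpi] at hpq
                  exact ⟨p, hstep p hpi hp, hpq⟩
                · rw [Function.update_of_ne hpi, Function.update_of_ne hqi] at hpq
                  exact hinj (hstep p hpi hp) (hstep q hqi hq) hpq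
            · intro i hi
              by_cases hii : i = i₀
              · rw [hii, Function.update_self, Function.update_self]
              · have hstep : m + 1 ≤ (i : ℕ) := by
                  have : (i : ℕ) ≠ m := fun h => hii (Fin.ext h)
                  omega
                rw [Function.update_of_ne hii, Function.update_of_ne hii]
                exact hval i (by omega)
        have hDF : ∀ c ∈ IntermediateField.adjoin k (Set.range x), D c = 0 := by
          intro c hc
          refine NB.derivation_apply_eq_zero_of_mem_adjoin D ?_ hc
          rintro w ⟨t, rfl⟩
          exact hDx t
        have hall := NB.derivation_eq_zero_of_isAlgebraic HX D hDF (v i₀)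
        rw [NambuBracket.toDerivation_apply, Function.update_eq_self] at hall
        exact hall
      · have hempty : ∀ a : Fin n, ¬ (m ≤ (a : ℕ)) := by
          intro a ha
          exact hm (lt_of_le_of_lt ha a.isLt)
        exact ih v u (fun a ha => absurd ha (hempty a))
          (fun i hi => absurd hi (hempty i))
  exact hv₀ (key n v₀ id (fun a ha => absurd a.isLt (not_lt.2 ha))
    (fun i hi => absurd i.isLt (not_lt.2 hi)))
end

section
/- Let N be an n-Lie Poisson field over a field k of characteristic 0, let t_1, …, t_n be nonzero elements of N, let (a_{ij}) be an n×n integer matrix, and set y_i = ∏_{j=1}^n t_j^{a_{ij}}. Then {y_1,…,y_n}·y_1^{-1}⋯y_n^{-1} = det(a_{ij}) · {t_1,…,t_n}·t_1^{-1}⋯t_n^{-1}. -/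
namespace NambuAux

variable {k N : Type*} [Field k] [Field N] [Algebra k N] {n : ℕ}

/-- The logarithmic-derivative-style function on tuples of units. -/
noncomputable def Fdef (π : NambuBracket k N n) (v : Fin n → Additive Nˣ) : N :=
  π.bracket (fun i => ((Additive.toMul (v i) : Nˣ) : N)) *
    ∏ i, (((Additive.toMul (v i) : Nˣ) : N))⁻¹

lemma key_leibniz (π : NambuBracket k N n)
    (w : Fin n → N) (i : Fin n) (a b P : N) (ha : a ≠ 0) (hb : b ≠ 0) :
    π.bracket (Function.update w i (a * b)) * ((a * b)⁻¹ * P) =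
      π.bracket (Function.update w i a) * (a⁻¹ * P) +
      π.bracket (Function.update w i b) * (b⁻¹ * P) := by
  rw [π.leibniz]
  field_simp
  ring

lemma Fdef_update (π : NambuBracket k N n)
    (v : Fin n → Additive Nˣ) (i : Fin n) (x : Additive Nˣ) :
    Fdef π (Function.update v i x) =
      π.bracket (Function.update (fun j => ((Additive.toMul (v j) : Nˣ) : N)) i
        ((Additive.toMul x : Nˣ) : N)) *
      ((((Additive.toMul x : Nˣ) : N))⁻¹ *
        ∏ j ∈ Finset.univ \ {i}, (((Additive.toMul (v j) : Nˣ) : N))⁻¹) := by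
  unfold Fdef
  have hfun : (fun j => ((Additive.toMul (Function.update v i x j) : Nˣ) : N))
      = Function.update (fun j => ((Additive.toMul (v j) : Nˣ) : N)) i
          ((Additive.toMul x : Nˣ) : N) := by
    funext j
    exact Function.apply_update (fun _ (a : Additive Nˣ) => ((Additive.toMul a : Nˣ) : N)) v i x j
  have h : (fun j => (((Additive.toMul (Function.update v i x j) : Nˣ) : N))⁻¹)
        = Function.update (fun j => (((Additive.toMul (v j) : Nˣ) : N))⁻¹) i
            ((((Additive.toMul x : Nˣ) : N))⁻¹) := by
      funext j
      exact Function.apply_update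
        (fun _ (a : Additive Nˣ) => (((Additive.toMul a : Nˣ) : N))⁻¹) v i x j
  rw [hfun, h, Finset.prod_update_of_mem (Finset.mem_univ i)]

lemma Fdef_add (π : NambuBracket k N n)
    (v : Fin n → Additive Nˣ) (i : Fin n) (x y : Additive Nˣ) :
    Fdef π (Function.update v i (x + y)) =
      Fdef π (Function.update v i x) + Fdef π (Function.update v i y) := by
  rw [Fdef_update, Fdef_update, Fdef_update]
  have hx : ((Additive.toMul (x + y) : Nˣ) : N)
      = ((Additive.toMul x : Nˣ) : N) * ((Additive.toMul y : Nˣ) : N) := by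
    rw [toMul_add]; exact Units.val_mul _ _
  rw [hx]
  exact key_leibniz π _ i _ _ _ (Units.ne_zero _) (Units.ne_zero _)

lemma Fdef_smul (π : NambuBracket k N n)
    (v : Fin n → Additive Nˣ) (i : Fin n) (c : ℤ) (x : Additive Nˣ) :
    Fdef π (Function.update v i (c • x)) = c • Fdef π (Function.update v i x) := by
  let φ : Additive Nˣ →+ N :=
    AddMonoidHom.mk' (fun a => Fdef π (Function.update v i a)) (Fdef_add π v i)
  exact map_zsmul φ c x

lemma Fdef_alt (π : NambuBracket k N n)
    (v : Fin n → Additive Nˣ) (i j : Fin n) (h : v i = v j) (hij : i ≠ j) :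
    Fdef π v = 0 := by
  unfold Fdef
  rw [π.alternate _ i j hij (by rw [h]), zero_mul]

noncomputable def Fmap (π : NambuBracket k N n) : (Additive Nˣ) [⋀^Fin n]→ₗ[ℤ] N where
  toFun := Fdef π
  map_update_add' := fun v i x y => by
    have : ‹DecidableEq (Fin n)› = instDecidableEqFin n := Subsingleton.elim _ _
    subst this; exact Fdef_add π v i x y
  map_update_smul' := fun v i c x => by
    have : ‹DecidableEq (Fin n)› = instDecidableEqFin n := Subsingleton.elim _ _
    subst this; exact Fdef_smul π v i c x
  map_eq_zero_of_eq' := Fdef_alt π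

end NambuAux

namespace NambuAux

lemma alt_map_int_matrix {n : ℕ} {V W : Type*} [AddCommGroup V] [AddCommGroup W]
    (f : V [⋀^Fin n]→ₗ[ℤ] W) (A : Matrix (Fin n) (Fin n) ℤ) (u : Fin n → V) :
    f (fun i => ∑ j, A i j • u j) = A.det • f u := by
  let L : (Fin n → ℤ) →ₗ[ℤ] V :=
    { toFun := fun c => ∑ j, c j • u j
      map_add' := by
        intro a b
        rw [← Finset.sum_add_distrib]
        exact Finset.sum_congr rfl fun x _ => add_smul _ _ _
      map_smul' := by
        intro r a
        simp only [RingHom.id_apply, Finset.smul_sum, Pi.smul_apply, smul_eq_mul, mul_smul] }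
  have hLe : ∀ i, L ((Pi.basisFun ℤ (Fin n)) i) = u i := by
    intro i
    simp [L, Pi.basisFun_apply, Pi.single_apply]
  have hGH : f.compLinearMap L =
      (LinearMap.toSpanSingleton ℤ W (f u)).compAlternatingMap Matrix.detRowAlternating := by
    apply Module.Basis.ext_alternating (Pi.basisFun ℤ (Fin n))
    intro v hv
    have hb : Function.Bijective v := Finite.injective_iff_bijective.mp hv
    let σ : Equiv.Perm (Fin n) := Equiv.ofBijective v hb
    have h1 : (fun i => (Pi.basisFun ℤ (Fin n)) (v i))
        = (fun i => (Pi.basisFun ℤ (Fin n)) i) ∘ σ := rfl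
    rw [h1, AlternatingMap.map_perm, AlternatingMap.map_perm]
    congr 1
    simp only [AlternatingMap.compLinearMap_apply, LinearMap.compAlternatingMap_apply,
      LinearMap.toSpanSingleton_apply]
    have h2 : (fun i => L ((Pi.basisFun ℤ (Fin n)) i)) = u := funext hLe
    have h3 : (fun i => ((Pi.basisFun ℤ (Fin n)) i : Fin n → ℤ))
        = (1 : Matrix (Fin n) (Fin n) ℤ) := by
      funext i j
      simp [Pi.basisFun_apply, Pi.single_apply, Matrix.one_apply, eq_comm]
    rw [h2, h3]
    show f u = (Matrix.det (1 : Matrix (Fin n) (Fin n) ℤ)) • f u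
    rw [Matrix.det_one, one_smul]
  have h4 := congrFun (congrArg DFunLike.coe hGH) (fun i => A i)
  simp only [AlternatingMap.compLinearMap_apply, LinearMap.compAlternatingMap_apply,
    LinearMap.toSpanSingleton_apply] at h4
  have h5 : (fun i => L (A i)) = fun i => ∑ j, A i j • u j := rfl
  rw [h5] at h4
  rw [h4]
  rfl

end NambuAux


/-- In an `n`-Lie Poisson field `N` over a field `k` of characteristic `0`,
for nonzero `t_1, …, t_n`, an integer matrix `(a_{ij})` and `y_i = ∏_j t_j^{a_{ij}}`, one
has `{y_1,…,y_n}·y_1⁻¹⋯y_n⁻¹ = det(a_{ij}) · {t_1,…,t_n}·t_1⁻¹⋯t_n⁻¹`. -/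
theorem nambu_bracket_monomial_det_formula
    (k N : Type*) [Field k] [CharZero k] [Field N] [Algebra k N]
    (n : ℕ) (π : NambuBracket k N n)
    (t : Fin n → N) (ht : ∀ j, t j ≠ 0)
    (M : Matrix (Fin n) (Fin n) ℤ)
    (y : Fin n → N) (hy : ∀ i, y i = ∏ j : Fin n, t j ^ (M i j)) :
    π.bracket y * ∏ i : Fin n, (y i)⁻¹ =
      (M.det : N) * (π.bracket t * ∏ i : Fin n, (t i)⁻¹) := by
    classical
  have hyne : ∀ i, y i ≠ 0 := by
    intro i
    rw [hy]
    exact Finset.prod_ne_zero_iff.mpr fun j _ => zpow_ne_zero _ (ht j)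
  set tu : Fin n → Additive Nˣ := fun j => Additive.ofMul (Units.mk0 (t j) (ht j)) with htu
  set yu : Fin n → Additive Nˣ := fun i => Additive.ofMul (Units.mk0 (y i) (hyne i)) with hyu
  have hyt : yu = fun i => ∑ j, M i j • tu j := by
    funext i
    apply (Equiv.injective Additive.toMul)
    apply Units.ext
    show y i = ((Additive.toMul (∑ j, M i j • tu j) : Nˣ) : N)
    rw [toMul_sum]
    rw [hy]
    rw [show ((∏ j, Additive.toMul (M i j • tu j) : Nˣ) : N)
        = ∏ j, ((Additive.toMul (M i j • tu j) : Nˣ) : N) from map_prod (Units.coeHom N) _ _]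
    refine Finset.prod_congr rfl fun j _ => ?_
    rw [toMul_zsmul]
    rw [Units.val_zpow_eq_zpow_val]
    rfl
  calc π.bracket y * ∏ i : Fin n, (y i)⁻¹ = NambuAux.Fmap π yu := rfl
    _ = NambuAux.Fmap π (fun i => ∑ j, M i j • tu j) := by rw [← hyt]
    _ = M.det • NambuAux.Fmap π tu := NambuAux.alt_map_int_matrix _ M tu
    _ = (M.det : N) * (π.bracket t * ∏ i : Fin n, (t i)⁻¹) := by
        rw [zsmul_eq_mul]
        rfl
end

section
/- The Nambu-Poisson torus T(q,κ) (with q ∈ k×) is Nambu-Poisson simple: it has no nonzero proper ideals I with {I, T, …, T} ⊆ I. -/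
/-- The Laurent polynomial ring `k[x_1^{±1},…,x_n^{±1}]`, realized as the group algebra
of `ℤ^n`. -/
abbrev LaurentRing (k : Type*) [CommRing k] (n : ℕ) : Type _ :=
  AddMonoidAlgebra k (Fin n → ℤ)

/-- The generator `x_i` of the Laurent ring. -/
noncomputable def laurentX {k : Type*} [CommRing k] {n : ℕ} (i : Fin n) : LaurentRing k n :=
  AddMonoidAlgebra.single (fun j => if j = i then (1 : ℤ) else 0) (1 : k)

/-- `π` is a Nambu-Poisson torus structure `T(q,κ)`: the `n`-Lie Poisson bracket satisfies
`{x_1,…,x_n} = q·x_1^{1+κ_1}⋯x_n^{1+κ_n}`. -/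
def IsTorusBracket {k : Type*} [CommRing k] {n : ℕ}
    (π : NambuBracket k (LaurentRing k n) n) (q : k) (κ : Fin n → ℤ) : Prop :=
  π.bracket (fun i => laurentX i) =
    q • AddMonoidAlgebra.single (fun j => 1 + κ j) (1 : k)

namespace TorusAux

variable {k : Type*} [Field k] {n : ℕ}

/-- A monomial in the Laurent ring, with the instances pinned. -/
noncomputable def sg (γ : Fin n → ℤ) (r : k) : LaurentRing k n := AddMonoidAlgebra.single γ r

lemma sg_mul_sg (γ δ : Fin n → ℤ) (r s : k) :
    sg γ r * sg δ s = sg (γ + δ) (r * s) := AddMonoidAlgebra.single_mul_single ..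

lemma sg_apply (γ δ : Fin n → ℤ) (r : k) : (sg γ r).coeff δ = if γ = δ then r else 0 :=
  Finsupp.single_apply

lemma one_eq_sg : (1 : LaurentRing k n) = sg 0 1 := AddMonoidAlgebra.one_def

lemma sg_zero (γ : Fin n → ℤ) : (sg γ (0:k)) = 0 := AddMonoidAlgebra.single_zero γ

lemma sg_neg (γ : Fin n → ℤ) (r : k) : sg γ (-r) = - sg γ r :=
  AddMonoidAlgebra.single_neg γ r

/-- The exponent vector of the `i`-th variable. -/
def eV (n : ℕ) (i : Fin n) : Fin n → ℤ := fun j => if j = i then 1 else 0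

lemma laurentX_eq (i : Fin n) : (laurentX i : LaurentRing k n) = sg (eV n i) 1 := rfl

lemma eV_sum (γ : Fin n → ℤ) : γ = ∑ j, γ j • eV n j := by
  funext x
  rw [Finset.sum_apply]
  simp [eV, Finset.sum_ite_eq']

lemma smul_eq_constmul (r : k) (x : LaurentRing k n) : r • x = sg 0 r * x := by
  rw [Algebra.smul_def]
  congr 1

lemma zsmul_eq_constmul (z : ℤ) (x : LaurentRing k n) :
    z • x = sg 0 ((z : ℤ) : k) * x := by
  rw [← Int.cast_smul_eq_zsmul k, smul_eq_constmul]


/-- Weighting operator: multiply the coefficient of `x^γ` by `γ i`. -/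
noncomputable def wt (i : Fin n) (a : LaurentRing k n) : LaurentRing k n :=
  a.coeff.sum fun γ r => sg γ (((γ i : ℤ) : k) * r)

lemma wt_apply (i : Fin n) (a : LaurentRing k n) (δ : Fin n → ℤ) :
    (wt i a).coeff δ = ((δ i : ℤ) : k) * a.coeff δ := by
  classical
  rw [wt, AddMonoidAlgebra.coeff_finsuppSum, Finsupp.sum_apply, Finsupp.sum]
  rw [Finset.sum_congr rfl (fun γ _ => sg_apply γ δ _)]
  rw [Finset.sum_ite_eq' a.coeff.support δ (fun γ => ((γ i : ℤ) : k) * a.coeff γ)]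
  by_cases hδ : δ ∈ a.coeff.support
  · simp [hδ]
  · simp [hδ, Finsupp.notMem_support_iff.mp hδ]

/-- Derivation formula: an additive Leibniz map killing constants, with prescribed
values on the generators, acts on every monomial as claimed. -/
theorem deriv_sg (D : LaurentRing k n → LaurentRing k n) (c : LaurentRing k n) (i : Fin n)
    (hadd : ∀ a b, D (a + b) = D a + D b)
    (hleib : ∀ a b, D (a * b) = a * D b + b * D a)
    (hconst : ∀ r : k, D (sg 0 r) = 0)
    (hgen : ∀ j, D (sg (eV n j) 1) = if j = i then c else 0)
    (γ : Fin n → ℤ) (r : k) :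
    D (sg γ r) = sg (γ - eV n i) (((γ i : ℤ) : k) * r) * c := by
  classical
  -- the "logarithmic derivative" is additive
  set f : (Fin n → ℤ) → LaurentRing k n := fun γ => sg (-γ) 1 * D (sg γ 1) with hf
  have hfadd : ∀ γ δ, f (γ + δ) = f γ + f δ := by
    intro γ δ
    have h1 : sg γ (1:k) * sg δ 1 = sg (γ + δ) 1 := by rw [sg_mul_sg, one_mul]
    have h2 : D (sg (γ + δ) (1:k)) = sg γ 1 * D (sg δ 1) + sg δ 1 * D (sg γ 1) := by
      rw [← h1]; exact hleib _ _
    have h3 : sg (-(γ + δ)) (1:k) * sg γ 1 = sg (-δ) 1 := by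
      rw [sg_mul_sg, one_mul]; congr 1; abel
    have h4 : sg (-(γ + δ)) (1:k) * sg δ 1 = sg (-γ) 1 := by
      rw [sg_mul_sg, one_mul]; congr 1; abel
    calc sg (-(γ + δ)) 1 * D (sg (γ + δ) 1)
        = sg (-(γ + δ)) 1 * sg γ 1 * D (sg δ 1) +
            sg (-(γ + δ)) 1 * sg δ 1 * D (sg γ 1) := by
          rw [h2, mul_add, mul_assoc, mul_assoc]
      _ = sg (-δ) 1 * D (sg δ 1) + sg (-γ) 1 * D (sg γ 1) := by rw [h3, h4]
      _ = f γ + f δ := by rw [hf]; ring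
  let F : (Fin n → ℤ) →+ LaurentRing k n := AddMonoidHom.mk' f hfadd
  have hFval : ∀ γ, F γ = sg (-eV n i) ((γ i : ℤ) : k) * c := by
    intro γ
    rw [show F γ = F (∑ j, γ j • eV n j) from by rw [← eV_sum γ]]
    rw [map_sum]
    rw [Finset.sum_congr rfl (fun j _ => map_zsmul F (γ j) (eV n j))]
    have hFe : ∀ j : Fin n, F (eV n j) = if j = i then sg (-eV n i) 1 * c else 0 := by
      intro j
      show sg (-eV n j) 1 * D (sg (eV n j) 1) = _
      rw [hgen j]
      split
      · next h => subst h; rfl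
      · rw [mul_zero]
    rw [Finset.sum_congr rfl (fun j _ => by rw [hFe j])]
    have hsmul_ite : ∀ j : Fin n,
        (γ j • if j = i then sg (-eV n i) 1 * c else 0) =
          if j = i then γ j • (sg (-eV n i) 1 * c) else 0 := by
      intro j; split <;> simp
    rw [Finset.sum_congr rfl (fun j _ => hsmul_ite j)]
    rw [Finset.sum_ite_eq' Finset.univ i (fun j => γ j • (sg (-eV n i) 1 * c))]
    rw [if_pos (Finset.mem_univ i)]
    rw [zsmul_eq_constmul, ← mul_assoc, sg_mul_sg, mul_one, zero_add]
  have hDγ1 : D (sg γ 1) = sg (γ - eV n i) ((γ i : ℤ) : k) * c := by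
    have h6 : sg γ (1:k) * F γ = D (sg γ 1) := by
      show sg γ (1:k) * (sg (-γ) 1 * D (sg γ 1)) = D (sg γ 1)
      rw [← mul_assoc, sg_mul_sg, one_mul]
      rw [show γ + -γ = 0 from by abel, ← one_eq_sg, one_mul]
    rw [← h6, hFval, ← mul_assoc, sg_mul_sg, one_mul, sub_eq_add_neg]
  -- now general coefficient r
  have hsgr : sg γ r = sg 0 r * sg γ 1 := by rw [sg_mul_sg, zero_add, mul_one]
  rw [hsgr, hleib, hconst, mul_zero, add_zero, hDγ1, ← mul_assoc, sg_mul_sg]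
  rw [zero_add, mul_comm r _]

/-- The key combinatorial step: an ideal closed under all weighting operators is
`⊤` as soon as it contains a nonzero element. -/
theorem ideal_eq_top [CharZero k] (I : Ideal (LaurentRing k n))
    (hwt : ∀ (i : Fin n) a, a ∈ I → wt i a ∈ I)
    (a : LaurentRing k n) (ha : a ∈ I) (ha0 : a ≠ 0) : I = ⊤ := by
  classical
  suffices H : ∀ N (a : LaurentRing k n), a ∈ I → a ≠ 0 → a.coeff.support.card ≤ N → I = ⊤ by
    exact H a.coeff.support.card a ha ha0 le_rfl
  intro N
  induction N with
  | zero =>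
    intro a ha ha0 hcard
    exact absurd (AddMonoidAlgebra.coeff_eq_zero.mp (Finsupp.card_support_eq_zero.mp (Nat.le_zero.mp hcard))) ha0
  | succ N ih =>
    intro a ha ha0 hcard
    by_cases h1 : a.coeff.support.card = 1
    · obtain ⟨α, c, hc, hac⟩ := Finsupp.card_support_eq_one'.mp h1
      obtain rfl : a = sg α c := AddMonoidAlgebra.coeff_injective hac
      have hmul : sg (-α) c⁻¹ * sg α c = 1 := by
        rw [sg_mul_sg, inv_mul_cancel₀ hc, neg_add_cancel, ← one_eq_sg]
      have h1I : (1 : LaurentRing k n) ∈ I := by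
        rw [← hmul]; exact I.mul_mem_left _ ha
      exact (Ideal.eq_top_iff_one I).mpr h1I
    · have hpos : 0 < a.coeff.support.card := by
        rcases Nat.eq_zero_or_pos a.coeff.support.card with h | h
        · exact absurd (AddMonoidAlgebra.coeff_eq_zero.mp (Finsupp.card_support_eq_zero.mp h)) ha0
        · exact h
      have h2 : 1 < a.coeff.support.card := lt_of_le_of_ne hpos (Ne.symm h1)
      obtain ⟨α, hα, β, hβ, hne⟩ := Finset.one_lt_card.mp h2
      obtain ⟨i, hi⟩ := Function.ne_iff.mp hne
      set b := wt i a - sg 0 ((α i : ℤ) : k) * a with hb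
      have hbI : b ∈ I := sub_mem (hwt i a ha) (I.mul_mem_left _ ha)
      have hbap : ∀ δ, b.coeff δ = (((δ i : ℤ) : k) - ((α i : ℤ) : k)) * a.coeff δ := by
        intro δ
        rw [hb, AddMonoidAlgebra.coeff_sub, Finsupp.sub_apply, wt_apply, ← smul_eq_constmul,
          AddMonoidAlgebra.coeff_smul, Finsupp.smul_apply,
          smul_eq_mul, sub_mul]
      have hbβ : b.coeff β ≠ 0 := by
        rw [hbap]
        apply mul_ne_zero
        · rw [sub_ne_zero]
          intro hh
          exact hi (Int.cast_injective hh).symm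
        · exact Finsupp.mem_support_iff.mp hβ
      have hb0 : b ≠ 0 := fun h => hbβ (by rw [h]; rfl)
      have hbsupp : b.coeff.support ⊆ a.coeff.support.erase α := by
        intro δ hδ
        have hbδ := Finsupp.mem_support_iff.mp hδ
        rw [Finset.mem_erase]
        constructor
        · rintro rfl
          apply hbδ
          rw [hbap, sub_self, zero_mul]
        · rw [Finsupp.mem_support_iff]
          intro h0
          exact hbδ (by rw [hbap, h0, mul_zero])
      have hcb : b.coeff.support.card ≤ N := by
        calc b.coeff.support.card ≤ (a.coeff.support.erase α).card := Finset.card_le_card hbsupp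
          _ = a.coeff.support.card - 1 := Finset.card_erase_of_mem hα
          _ ≤ N := by omega
      exact ih b hbI hb0 hcb

end TorusAux

open TorusAux

section Main

variable {k : Type*} [Field k] [CharZero k] {n : ℕ} [NeZero n]

/-- The bracket as a multilinear map. -/
noncomputable def NambuBracket.toMulti (π : NambuBracket k (LaurentRing k n) n) :
    MultilinearMap k (fun _ : Fin n => LaurentRing k n) (LaurentRing k n) where
  toFun := π.bracket
  map_update_add' {dec} m i x y := by
    have hdec : dec = instDecidableEqFin n := Subsingleton.elim _ _
    subst hdec
    exact π.map_add m i x y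
  map_update_smul' {dec} m i c x := by
    have hdec : dec = instDecidableEqFin n := Subsingleton.elim _ _
    subst hdec
    exact π.map_smul m i c x

/-- The bracket as an alternating map. -/
noncomputable def NambuBracket.toAlt (π : NambuBracket k (LaurentRing k n) n) :
    (LaurentRing k n) [⋀^Fin n]→ₗ[k] (LaurentRing k n) :=
  { π.toMulti with
    map_eq_zero_of_eq' := fun v i j h hij => by exact π.alternate v i j hij h }

theorem wt_mem (q : k) (hq : q ≠ 0) (κ : Fin n → ℤ)
    (π : NambuBracket k (LaurentRing k n) n) (hπ : IsTorusBracket π q κ)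
    (I : Ideal (LaurentRing k n))
    (hI : ∀ a ∈ I, ∀ v : Fin n → LaurentRing k n,
      π.bracket (Function.update v 0 a) ∈ I)
    (i : Fin n) (a : LaurentRing k n) (ha : a ∈ I) : wt i a ∈ I := by
  classical
  set θ : Fin n → ℤ := fun j => 1 + κ j with hθ
  set s : k := if i = 0 then 1 else -1 with hs
  have hss : s * s = 1 := by rw [hs]; split <;> ring
  set v : Fin n → LaurentRing k n := fun j => laurentX (Equiv.swap 0 i j) with hv
  set D : LaurentRing k n → LaurentRing k n :=
    fun f => π.bracket (Function.update v 0 f) with hD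
  have hDadd : ∀ x y, D (x + y) = D x + D y := fun x y => π.map_add v 0 x y
  have hDleib : ∀ x y, D (x * y) = x * D y + y * D x := fun x y => π.leibniz v 0 x y
  have hDsmul : ∀ (r : k) x, D (r • x) = r • D x := fun r x => π.map_smul v 0 r x
  have hD1 : D 1 = 0 := by
    have h := hDleib 1 1
    simp only [mul_one, one_mul] at h
    exact right_eq_add.mp h
  have hDconst : ∀ r : k, D (sg 0 r) = 0 := by
    intro r
    have h : sg 0 r = r • (1 : LaurentRing k n) := by
      rw [smul_eq_constmul, mul_one]
    rw [h, hDsmul, hD1, smul_zero]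
  have hbase : π.bracket (fun j => laurentX j) = sg θ q := by
    have h : π.bracket (fun i => laurentX i) =
        q • AddMonoidAlgebra.single (fun j => 1 + κ j) (1 : k) := hπ
    rw [h]
    have h2 : (AddMonoidAlgebra.single (fun j => 1 + κ j) (1 : k) : LaurentRing k n) = sg θ 1 := rfl
    rw [h2, smul_eq_constmul, sg_mul_sg, zero_add, mul_one]
  have hgen : ∀ j, D (sg (eV n j) 1) = if j = i then sg θ (s * q) else 0 := by
    intro j
    by_cases hji : j = i
    · subst hji
      rw [if_pos rfl]
      have hupdate : Function.update v 0 (sg (eV n j) (1:k)) = v := by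
        funext x
        by_cases hx : x = 0
        · subst hx
          rw [Function.update_self, hv]
          simp only [Equiv.swap_apply_left]
          rfl
        · rw [Function.update_of_ne hx]
      show π.bracket (Function.update v 0 (sg (eV n j) 1)) = sg θ (s * q)
      rw [hupdate]
      by_cases h0 : j = 0
      · subst h0
        have hvx : v = fun x => laurentX x := by
          funext x; rw [hv]; simp [Equiv.swap_self]
        rw [hvx, hbase, hs, if_pos rfl, one_mul]
      · have hswap := π.toAlt.map_swap laurentX (Ne.symm h0 : (0 : Fin n) ≠ j)
        have hvcomp : v = laurentX ∘ Equiv.swap 0 j := rfl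
        have hres : π.bracket (laurentX ∘ Equiv.swap 0 j) =
            - π.bracket (fun x => laurentX x) := by exact hswap
        rw [hvcomp, hres, hbase, hs, if_neg h0, ← sg_neg, neg_one_mul]
    · rw [if_neg hji]
      set t := Equiv.swap 0 i j with ht
      have htne : t ≠ 0 := by
        rw [ht]; intro hcontra
        have h2 := congrArg (Equiv.swap 0 i) hcontra
        rw [Equiv.swap_apply_self, Equiv.swap_apply_left] at h2
        exact hji h2
      have hw0 : Function.update v 0 (sg (eV n j) (1:k)) 0 = sg (eV n j) 1 :=
        Function.update_self _ _ _
      have hwt : Function.update v 0 (sg (eV n j) (1:k)) t = sg (eV n j) 1 := by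
        rw [Function.update_of_ne htne, hv]
        show laurentX (Equiv.swap 0 i t) = _
        rw [ht, Equiv.swap_apply_self]
        rfl
      exact π.alternate _ 0 t (Ne.symm htne) (by rw [hw0, hwt])
  have hDsg := deriv_sg D (sg θ (s * q)) i hDadd hDleib hDconst hgen
  set E : LaurentRing k n → LaurentRing k n :=
    fun b => sg (eV n i - θ) (s * q⁻¹) * D b with hE
  have hEsg : ∀ γ (r : k), E (sg γ r) = sg γ (((γ i : ℤ) : k) * r) := by
    intro γ r
    show sg (eV n i - θ) (s * q⁻¹) * D (sg γ r) = _
    rw [hDsg γ r, ← mul_assoc, sg_mul_sg, sg_mul_sg]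
    congr 1
    · funext x
      simp only [Pi.add_apply, Pi.sub_apply]
      ring
    · rw [show s * q⁻¹ * (((γ i : ℤ) : k) * r) * (s * q)
          = (s * s) * (q⁻¹ * q) * (((γ i : ℤ) : k) * r) from by ring]
      rw [hss, inv_mul_cancel₀ hq, one_mul, one_mul]
  have hD0 : D 0 = 0 := by
    have h := hDadd 0 0
    rw [add_zero] at h
    exact (right_eq_add.mp h)
  have hEwt : ∀ b, E b = wt i b := by
    intro b
    obtain ⟨b, rfl⟩ : ∃ c, b = AddMonoidAlgebra.ofCoeff c := ⟨b.coeff, rfl⟩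
    induction b using Finsupp.induction with
    | zero =>
      show sg (eV n i - θ) (s * q⁻¹) * D 0 = wt i 0
      rw [hD0, mul_zero, wt, AddMonoidAlgebra.coeff_zero, Finsupp.sum_zero_index]
    | single_add γ r g hγ hr ih =>
      have hstep : E (AddMonoidAlgebra.ofCoeff (Finsupp.single γ r + g)) =
          E (sg γ r) + E (AddMonoidAlgebra.ofCoeff g) := by
        show sg (eV n i - θ) (s * q⁻¹) * D (sg γ r + AddMonoidAlgebra.ofCoeff g) = _
        rw [hDadd, mul_add]
      rw [hstep, hEsg, ih]
      ext δ
      rw [AddMonoidAlgebra.coeff_add, Finsupp.add_apply, wt_apply, sg_apply, wt_apply]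
      have hadd : (AddMonoidAlgebra.ofCoeff (Finsupp.single γ r + g) : LaurentRing k n).coeff δ =
          (sg γ r).coeff δ + (AddMonoidAlgebra.ofCoeff g : LaurentRing k n).coeff δ :=
        Finsupp.add_apply _ _ _
      rw [hadd, sg_apply, mul_add]
      congr 1
      split
      · next h => subst h; rfl
      · rw [mul_zero]
  have hfin : wt i a = sg (eV n i - θ) (s * q⁻¹) * D a := (hEwt a).symm
  rw [hfin]
  exact I.mul_mem_left _ (hI a ha v)

end Main

/-- The Nambu-Poisson torus `T(q,κ)` (with `q ≠ 0`) is Nambu-Poisson simple: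
every ideal `I` with `{I, T, …, T} ⊆ I` is `⊥` or `⊤`. -/
theorem torus_is_nambu_simple
    (k : Type*) [Field k] [CharZero k]
    (n : ℕ) [NeZero n] (q : k) (hq : q ≠ 0) (κ : Fin n → ℤ)
    (π : NambuBracket k (LaurentRing k n) n) (hπ : IsTorusBracket π q κ)
    (I : Ideal (LaurentRing k n))
    (hI : ∀ a ∈ I, ∀ v : Fin n → LaurentRing k n,
      π.bracket (Function.update v 0 a) ∈ I) :
    I = ⊥ ∨ I = ⊤ := by
  rcases eq_or_ne I ⊥ with h | h
  · exact Or.inl h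
  · right
    obtain ⟨a, haI, ha0⟩ := Submodule.exists_mem_ne_zero_of_ne_bot h
    exact ideal_eq_top I (fun i b hb => wt_mem q hq κ π hπ I hI i b hb) a haI ha0
end
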